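/- Suppose Γ is a class of sets W with |W| = ω₁ ⊆ W and RP_Γ holds. Then for every regular θ ≥ ω₂ and every stationary S ⊆ [H_θ]^ω there are in fact stationarily many W ∈ [H_θ]^{ω₁} ∩ Γ such that S ∩ [W]^ω is stationary in [W]^ω. -/

import Mathlib

/-!
Common framework for formalizing "Chang's Conjecture and semiproperness of
nonreasonable posets" (Cox).

We work in the universe of ZFC sets provided by Mathlib's `ZFSet`.  "Models of
ZFC" (ground models, forcing extensions, inner models) are rendered as
transitive classes `V : Set ZFSet` that contain all ordinals, are closed under
the Gödel operations, are almost universal and satisfy choice (by Jech's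
criterion such a class is exactly a transitive proper-class model of ZFC).
All set-theoretic notions (cardinals ω₁, ω₂, ω₃, the sets H_θ, countability,
stationarity, etc.) are relativized to such a class `U`; the ambient universe
is the class `V0 = Set.univ`.

First-order elementarity `M ≺ (A, ∈, Δ)` is genuine model-theoretic
elementarity, via Mathlib's first-order logic library, for the language with
two binary relation symbols (membership and a predicate for a wellorder Δ).

Forcing-theoretic notions (semiproperness, properness, preservation of
stationary subsets of ω₁, "forcing that the ground-model [ω₂]^ω is
nonstationary") are rendered by their standard combinatorial characterizations
via maximal antichains (names for countable ordinals are coded by a maximal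
antichain together with an ordinal value attached to each of its elements),
and via generic filters over class models.
-/

namespace CCPaper

noncomputable section

open ZFSet

/-- A "class" of the ambient set-theoretic universe. -/
abbrev VClass := Set ZFSet

/-- The ambient universe, viewed as a class. -/
def V0 : VClass := Set.univ

/-- von Neumann ordinal. -/
def IsOrd (x : ZFSet) : Prop := x.IsOrdinal

/-- ordinal successor -/
def succZ (x : ZFSet) : ZFSet := insert x x

def IsLimitOrd (x : ZFSet) : Prop := IsOrd x ∧ x ≠ ∅ ∧ ∀ y ∈ x, succZ y ∈ x

/-- supremum of a set of ordinals -/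
def supZ (X : ZFSet) : ZFSet := ZFSet.sUnion X

/-- `g` is (the graph of) a function with domain `d`. -/
def IsFunGraph (g d : ZFSet) : Prop :=
  (∀ p ∈ g, ∃ a ∈ d, ∃ b : ZFSet, p = ZFSet.pair a b) ∧
  (∀ a ∈ d, ∃! b : ZFSet, ZFSet.pair a b ∈ g) ∧
  (∀ a b : ZFSet, ZFSet.pair a b ∈ g → a ∈ d)

def MapsInto (g X : ZFSet) : Prop := ∀ a b : ZFSet, ZFSet.pair a b ∈ g → b ∈ X

def IsInjGraph (g d X : ZFSet) : Prop :=
  IsFunGraph g d ∧ MapsInto g X ∧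
    ∀ a a' b : ZFSet, ZFSet.pair a b ∈ g → ZFSet.pair a' b ∈ g → a = a'

def IsBijGraph (g d X : ZFSet) : Prop :=
  IsInjGraph g d X ∧ ∀ b ∈ X, ∃ a : ZFSet, ZFSet.pair a b ∈ g

/-- `|x| ≤ |y|`, as computed in the class `U`. -/
def cardLE (U : VClass) (x y : ZFSet) : Prop := ∃ g ∈ U, IsInjGraph g x y

/-- `|x| < θ` for a cardinal `θ`, as computed in `U`. -/
def cardLT (U : VClass) (x θ : ZFSet) : Prop := ∃ α ∈ θ, cardLE U x α

def cardEq (U : VClass) (x y : ZFSet) : Prop := ∃ g ∈ U, IsBijGraph g x y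

def IsCtble (U : VClass) (x : ZFSet) : Prop := cardLE U x ZFSet.omega

def IsFin (x : ZFSet) : Prop := ∃ n ∈ ZFSet.omega, ∃ g : ZFSet, IsBijGraph g x n

/-- ω₁ as computed in the class `U` (the least non-`U`-countable ordinal). -/
def omega1 (U : VClass) : ZFSet :=
  Classical.epsilon fun α => IsOrd α ∧ ¬ IsCtble U α ∧ ∀ β ∈ α, IsCtble U β

/-- ω₂ as computed in `U`. -/
def omega2 (U : VClass) : ZFSet :=
  Classical.epsilon fun α =>
    IsOrd α ∧ ¬ cardLE U α (omega1 U) ∧ ∀ β ∈ α, cardLE U β (omega1 U)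

/-- ω₃ as computed in `U`. -/
def omega3 (U : VClass) : ZFSet :=
  Classical.epsilon fun α =>
    IsOrd α ∧ ¬ cardLE U α (omega2 U) ∧ ∀ β ∈ α, cardLE U β (omega2 U)

def IsCardinal (U : VClass) (κ : ZFSet) : Prop := IsOrd κ ∧ ∀ α ∈ κ, ¬ cardLE U κ α

/-- `x` is unbounded (cofinal) in the ordinal `δ`. -/
def Unbdd (x δ : ZFSet) : Prop := ∀ β ∈ δ, ∃ γ ∈ x, β ∈ γ

/-- `θ` is an uncountable regular cardinal, as computed in `U`. -/
def IsRegular (U : VClass) (θ : ZFSet) : Prop :=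
  IsCardinal U θ ∧ ZFSet.omega ∈ θ ∧
    ∀ x ∈ U, x ⊆ θ → Unbdd x θ → ¬ cardLT U x θ

/-- `H_θ`, the collection of sets of hereditary cardinality `< θ`, computed in `U`. -/
def Hset (U : VClass) (θ : ZFSet) : ZFSet :=
  Classical.epsilon fun H => ∀ x : ZFSet,
    x ∈ H ↔ (x ∈ U ∧ ∃ t ∈ U, x ⊆ t ∧ t.IsTransitive ∧ cardLT U t θ)

/-- `w` is (the set of pairs of) a strict wellordering of `A`. -/
def IsWO (w A : ZFSet) : Prop :=
  (∀ p ∈ w, ∃ a ∈ A, ∃ b ∈ A, p = ZFSet.pair a b) ∧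
  (∀ a ∈ A, ZFSet.pair a a ∉ w) ∧
  (∀ a ∈ A, ∀ b ∈ A, ∀ c ∈ A,
      ZFSet.pair a b ∈ w → ZFSet.pair b c ∈ w → ZFSet.pair a c ∈ w) ∧
  (∀ a ∈ A, ∀ b ∈ A, a ≠ b → (ZFSet.pair a b ∈ w ∨ ZFSet.pair b a ∈ w)) ∧
  (∀ x : ZFSet, x ⊆ A → x ≠ ∅ → ∃ m ∈ x, ∀ y ∈ x, ZFSet.pair y m ∉ w)

/-! ### First-order elementarity -/

/-- Two binary relation symbols: membership, and a symbol for a wellorder `Δ`. -/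
inductive Rel2 : ℕ → Type
  | mem : Rel2 2
  | delta : Rel2 2

/-- The language `{∈, Δ}`. -/
def Lst : FirstOrder.Language := ⟨fun _ => Empty, Rel2⟩

/-- The `Lst`-structure `(A, ∈, w)` on the members of the ZF-set `A`, where the
second binary relation is interpreted by `x Δ y ↔ (x, y) ∈ w`. -/
def zStruct (A w : ZFSet) : Lst.Structure {x : ZFSet // x ∈ A} where
  funMap := fun {_} f _ => f.elim
  RelMap := fun {n} r =>
    match n, r with
    | _, Rel2.mem => fun v =>
        ((v 0 : {x : ZFSet // x ∈ A}) : ZFSet) ∈ ((v 1 : {x : ZFSet // x ∈ A}) : ZFSet)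
    | _, Rel2.delta => fun v =>
        ZFSet.pair ((v 0 : {x : ZFSet // x ∈ A}) : ZFSet)
          ((v 1 : {x : ZFSet // x ∈ A}) : ZFSet) ∈ w

/-- `M ≺ (A, ∈, w)`:  `M ⊆ A` and `M` is a (fully) elementary substructure of
`A` with respect to membership and the relation coded by `w`. -/
def Prec (M A w : ZFSet) : Prop :=
  ∃ hMA : M ⊆ A,
    ∀ (k : ℕ) (φ : Lst.Formula (Fin k)) (v : Fin k → ZFSet) (hv : ∀ i, v i ∈ M),
      (letI := zStruct M w;
       φ.Realize (fun i => (⟨v i, hv i⟩ : {x : ZFSet // x ∈ M}))) ↔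
      (letI := zStruct A w;
       φ.Realize (fun i => (⟨v i, hMA (hv i)⟩ : {x : ZFSet // x ∈ A})))

/-- `M ⊑ N`: `M ⊆ N` and `M ∩ ω₁ = N ∩ ω₁` (with ω₁ computed in `U`). -/
def SqSub (U : VClass) (M N : ZFSet) : Prop :=
  M ⊆ N ∧ M ∩ omega1 U = N ∩ omega1 U

/-! ### Stationarity for sets of countable models -/

def FinSubsets (X : ZFSet) : ZFSet := ZFSet.sep (fun s => IsFin s) (ZFSet.powerset X)

/-- `g` is (the graph of) an algebra `[X]^{<ω} → X`. -/
def IsAlgebraOn (g X : ZFSet) : Prop := IsFunGraph g (FinSubsets X) ∧ MapsInto g X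

def ClosedUnder (z g : ZFSet) : Prop :=
  ∀ s b : ZFSet, ZFSet.pair s b ∈ g → s ⊆ z → b ∈ z

/-- The collection `S` is stationary in `[X]^ω`, as computed in the class `U`:
it meets every algebra on `X` lying in `U`. -/
def StatIn (U : VClass) (S : Set ZFSet) (X : ZFSet) : Prop :=
  ∀ g ∈ U, IsAlgebraOn g X →
    ∃ z : ZFSet, z ∈ S ∧ z ∈ U ∧ z ⊆ X ∧ IsCtble U z ∧ ClosedUnder z g

/-- `S` is semistationary in `[X]^ω` (computed in `U`): the set of `⊒`-extensions
of members of `S` is stationary. -/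
def SemistatIn (U : VClass) (S : Set ZFSet) (X : ZFSet) : Prop :=
  StatIn U {N | ∃ M ∈ S, M ⊆ N ∧ M ∩ omega1 U = N ∩ omega1 U} X

/-- "Club-many countable subsets of `X` belong to `S`" (computed in `U`):
all countable subsets of `X` closed under some fixed algebra belong to `S`. -/
def ClubMany (U : VClass) (S : Set ZFSet) (X : ZFSet) : Prop :=
  ∃ g ∈ U, IsAlgebraOn g X ∧
    ∀ z : ZFSet, z ∈ U → z ⊆ X → IsCtble U z → ClosedUnder z g → z ∈ S

/-! ### The Chang's Conjecture variants -/

/-- Strong Chang's Conjecture (SCC), relativized to `U`:  for all sufficiently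
large regular θ, every wellorder Δ of H_θ and every countable
`M ≺ (H_θ, ∈, Δ)`, there is `M̃ ≺ (H_θ, ∈, Δ)` with `M ⊏ M̃` and
`M̃ ∩ [sup(M ∩ ω₂), ω₂) ≠ ∅`. -/
def SCC (U : VClass) : Prop :=
  ∃ θ₀ : ZFSet, ∀ θ : ZFSet, IsRegular U θ → θ₀ ∈ θ →
    ∀ w ∈ U, IsWO w (Hset U θ) →
      ∀ M ∈ U, IsCtble U M → Prec M (Hset U θ) w →
        ∃ M' ∈ U, Prec M' (Hset U θ) w ∧ SqSub U M M' ∧ M ≠ M' ∧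
          ∃ β ∈ M', β ∈ omega2 U ∧ supZ (M ∩ omega2 U) ⊆ β

/-- `SCC^cof`, relativized to `U`: additionally the extensions reach cofinally
high below ω₂. -/
def SCCcof (U : VClass) : Prop :=
  ∃ θ₀ : ZFSet, ∀ θ : ZFSet, IsRegular U θ → θ₀ ∈ θ →
    ∀ w ∈ U, IsWO w (Hset U θ) →
      ∀ N ∈ U, IsCtble U N → Prec N (Hset U θ) w →
        ∀ α₀ ∈ omega2 U, ∃ α ∈ omega2 U, α₀ ⊆ α ∧
          ∃ N' ∈ U, Prec N' (Hset U θ) w ∧ SqSub U N N' ∧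
            ∃ β ∈ N', β ∈ omega2 U ∧ α ⊆ β

/-- `SCC^cof_gap`, relativized to `U`: as `SCC^cof`, with moreover
`N' ∩ [sup(N ∩ ω₂), α) = ∅`. -/
def SCCgap (U : VClass) : Prop :=
  ∃ θ₀ : ZFSet, ∀ θ : ZFSet, IsRegular U θ → θ₀ ∈ θ →
    ∀ w ∈ U, IsWO w (Hset U θ) →
      ∀ N ∈ U, IsCtble U N → Prec N (Hset U θ) w →
        ∀ α₀ ∈ omega2 U, ∃ α ∈ omega2 U, α₀ ⊆ α ∧
          ∃ N' ∈ U, Prec N' (Hset U θ) w ∧ SqSub U N N' ∧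
            (∃ β ∈ N', β ∈ omega2 U ∧ α ⊆ β) ∧
            (∀ β ∈ N', ¬ (supZ (N ∩ omega2 U) ⊆ β ∧ β ∈ α))

/-- Chang's Conjecture `(ω₂, ω₁) ↠ (ω₁, ω)`, relativized to `U`. -/
def CC (U : VClass) : Prop :=
  ∀ θ : ZFSet, IsOrd θ → omega2 U ⊆ θ →
    ∀ g ∈ U, IsAlgebraOn g (Hset U θ) →
      ∃ X ∈ U, X ⊆ Hset U θ ∧ ClosedUnder X g ∧
        cardLE U (omega1 U) (X ∩ omega2 U) ∧ X ∩ omega1 U ∈ omega1 U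

/-! ### Posets and combinatorial forcing notions -/

def leP (le a b : ZFSet) : Prop := ZFSet.pair a b ∈ le

def IsPoset (U : VClass) (P le : ZFSet) : Prop :=
  P ∈ U ∧ le ∈ U ∧
  (∀ p ∈ le, ∃ a ∈ P, ∃ b ∈ P, p = ZFSet.pair a b) ∧
  (∀ a ∈ P, leP le a a) ∧
  (∀ a b c : ZFSet, leP le a b → leP le b c → leP le a c)

def Compat (P le a b : ZFSet) : Prop := ∃ c ∈ P, leP le c a ∧ leP le c b

def IsAntichainP (P le A : ZFSet) : Prop :=
  A ⊆ P ∧ ∀ a ∈ A, ∀ b ∈ A, a ≠ b → ¬ Compat P le a b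

def IsMaxAntichain (P le A : ZFSet) : Prop :=
  IsAntichainP P le A ∧ ∀ p ∈ P, ∃ a ∈ A, Compat P le p a

def IsDense (P le D : ZFSet) : Prop := D ⊆ P ∧ ∀ p ∈ P, ∃ q ∈ D, leP le q p

def IsOpenP (P le D : ZFSet) : Prop := D ⊆ P ∧ ∀ q ∈ D, ∀ r ∈ P, leP le r q → r ∈ D

def IsFilterP (P le G : ZFSet) : Prop :=
  (∀ q ∈ G, q ∈ P) ∧ (∀ q ∈ G, ∀ p ∈ P, leP le q p → p ∈ G) ∧
  (∀ q ∈ G, ∀ r ∈ G, ∃ s ∈ G, leP le s q ∧ leP le s r)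

/-- `q` is an `(M, P)`-semigeneric condition (combinatorial characterization:
for every name for a countable ordinal coded in `M` by a maximal antichain `A`
and a value function `h : A → ω₁`, the set of `a ∈ A` with `h(a) ∈ M` is
predense below `q`).  This says exactly that `q ⊩ M̌ ⊑ M̌[Ġ]`. -/
def IsSemigeneric (U : VClass) (P le M q : ZFSet) : Prop :=
  q ∈ P ∧
    ∀ A ∈ M, IsMaxAntichain P le A →
      ∀ h ∈ M, IsFunGraph h A → MapsInto h (omega1 U) →
        ∀ r ∈ P, leP le r q →
          ∃ a ∈ A, Compat P le r a ∧ ∃ b : ZFSet, ZFSet.pair a b ∈ h ∧ b ∈ M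

/-- `q` is an `(M, P)`-master (generic) condition: for every maximal antichain
`A ∈ M`, `A ∩ M` is predense below `q`. -/
def IsMasterCond (P le M q : ZFSet) : Prop :=
  q ∈ P ∧
    ∀ A ∈ M, IsMaxAntichain P le A →
      ∀ r ∈ P, leP le r q → ∃ a ∈ A, a ∈ M ∧ Compat P le r a

/-- Semiproperness of the poset `(P, ≤)`, relativized to the class `U`. -/
def Semiproper (U : VClass) (P le : ZFSet) : Prop :=
  ∃ θ₀ : ZFSet, ∀ θ : ZFSet, IsRegular U θ → θ₀ ∈ θ →
    ∀ M ∈ U, IsCtble U M → Prec M (Hset U θ) ∅ → P ∈ M → le ∈ M →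
      ∀ q ∈ M, q ∈ P → ∃ q' ∈ P, leP le q' q ∧ IsSemigeneric U P le M q'

/-- Properness of the poset `(P, ≤)`, relativized to the class `U`. -/
def Proper (U : VClass) (P le : ZFSet) : Prop :=
  ∃ θ₀ : ZFSet, ∀ θ : ZFSet, IsRegular U θ → θ₀ ∈ θ →
    ∀ M ∈ U, IsCtble U M → Prec M (Hset U θ) ∅ → P ∈ M → le ∈ M →
      ∀ q ∈ M, q ∈ P → ∃ q' ∈ P, leP le q' q ∧ IsMasterCond P le M q'

/-- A coded `P`-name for a function `dom → rng` into the ordinals: to each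
`α ∈ dom` is attached a maximal antichain of `P` (the conditions deciding the
value at `α`) together with the ordinal values decided; coded as the set of
triples `((α, a), β)`. -/
def OrdName (U : VClass) (P le n dom rng : ZFSet) : Prop :=
  n ∈ U ∧
  (∀ t ∈ n, ∃ α ∈ dom, ∃ a ∈ P, ∃ β ∈ rng, t = ZFSet.pair (ZFSet.pair α a) β) ∧
  (∀ α ∈ dom,
    IsMaxAntichain P le
      (ZFSet.sep (fun a => ∃ β : ZFSet, ZFSet.pair (ZFSet.pair α a) β ∈ n) P)) ∧
  (∀ α a β β' : ZFSet, ZFSet.pair (ZFSet.pair α a) β ∈ n →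
      ZFSet.pair (ZFSet.pair α a) β' ∈ n → β = β')

def ClubInOrd (C γ : ZFSet) : Prop :=
  C ⊆ γ ∧ Unbdd C γ ∧ ∀ β ∈ γ, β ≠ ∅ → Unbdd (C ∩ β) β → β ∈ C

def StatSubOmega1 (U : VClass) (S : ZFSet) : Prop :=
  S ∈ U ∧ S ⊆ omega1 U ∧
    ∀ C ∈ U, ClubInOrd C (omega1 U) → ∃ δ ∈ S, δ ∈ C

/-- `(P, ≤)` preserves stationary subsets of ω₁ (combinatorial rendering: for
every stationary `S ⊆ ω₁`, every condition `p` and every coded name `n` for a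
function `ω₁ → ω₁`, some `q ≤ p` forces some `δ ∈ S` to be closed under the
named function; such `δ` form a club of the extension). -/
def PreservesStatOmega1 (U : VClass) (P le : ZFSet) : Prop :=
  ∀ S : ZFSet, StatSubOmega1 U S →
    ∀ p ∈ P, ∀ n : ZFSet, OrdName U P le n (omega1 U) (omega1 U) →
      ∃ q ∈ P, leP le q p ∧ ∃ δ ∈ S, ∀ α ∈ δ, ∀ a β : ZFSet,
        ZFSet.pair (ZFSet.pair α a) β ∈ n → Compat P le q a → β ∈ δ

/-- `(P, ≤)` is *nonreasonable at `[ω₂]^ω`*: some condition `p`, together with a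
coded name `n` for a function `F : [ω₂]^{<ω} → ω₂` of the extension, forces
that no ground-model countable `z ⊆ ω₂` is closed under `F`; i.e. `P` forces
the ground-model set `([ω₂]^ω)^V` to be nonstationary. -/
def NonreasonableAtOmega2 (U : VClass) (P le : ZFSet) : Prop :=
  ∃ p ∈ P, ∃ n : ZFSet,
    OrdName U P le n (FinSubsets (omega2 U)) (omega2 U) ∧
    ∀ z ∈ U, z ⊆ omega2 U → IsCtble U z →
      ∀ r ∈ P, leP le r p →
        ∃ s a β : ZFSet, s ⊆ z ∧ ZFSet.pair (ZFSet.pair s a) β ∈ n ∧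
          Compat P le r a ∧ β ∉ z

/-- σ-distributivity of `(P, ≤)` (computed in `U`): any countable family of
open dense sets (coded in `U` as a function on ω) has intersection dense. -/
def SigmaDistributive (U : VClass) (P le : ZFSet) : Prop :=
  ∀ d ∈ U, IsFunGraph d ZFSet.omega →
    (∀ m D : ZFSet, ZFSet.pair m D ∈ d → IsDense P le D ∧ IsOpenP P le D) →
    ∀ p ∈ P, ∃ q ∈ P, leP le q p ∧ ∀ m D : ZFSet, ZFSet.pair m D ∈ d → q ∈ D

/-- The `†` ("dagger") principle relativized to `U`: every poset preserving
stationary subsets of ω₁ is semiproper. -/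
def Dagger (U : VClass) : Prop :=
  ∀ P le : ZFSet, IsPoset U P le → PreservesStatOmega1 U P le → Semiproper U P le

/-- `†_{ω₂}`: every poset of size `≤ ω₂` preserving stationary subsets of ω₁ is
semiproper. -/
def DaggerOmega2 (U : VClass) : Prop :=
  ∀ P le : ZFSet, IsPoset U P le → cardLE U P (omega2 U) →
    PreservesStatOmega1 U P le → Semiproper U P le

/-- Martin's Maximum, relativized to `U`. -/
def MM (U : VClass) : Prop :=
  ∀ P le : ZFSet, IsPoset U P le → PreservesStatOmega1 U P le →
    ∀ D ∈ U, IsFunGraph D (omega1 U) →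
      (∀ α d : ZFSet, ZFSet.pair α d ∈ D → IsDense P le d) →
      ∃ G : ZFSet, IsFilterP P le G ∧
        ∀ α ∈ omega1 U, ∀ d : ZFSet, ZFSet.pair α d ∈ D → ∃ q ∈ G, q ∈ d

/-! ### Class models of ZFC -/

def prodZ (x y : ZFSet) : ZFSet :=
  ZFSet.sep (fun p => ∃ a ∈ x, ∃ b ∈ y, p = ZFSet.pair a b)
    (ZFSet.powerset (ZFSet.powerset (x ∪ y)))

def diffZ (x y : ZFSet) : ZFSet := ZFSet.sep (fun a => a ∉ y) x

def domZ (x : ZFSet) : ZFSet :=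
  ZFSet.sep (fun a => ∃ b : ZFSet, ZFSet.pair a b ∈ x) (ZFSet.sUnion (ZFSet.sUnion x))

def convZ (x : ZFSet) : ZFSet :=
  ZFSet.sep (fun p => ∃ a b : ZFSet, ZFSet.pair a b ∈ x ∧ p = ZFSet.pair b a)
    (prodZ (ZFSet.sUnion (ZFSet.sUnion x)) (ZFSet.sUnion (ZFSet.sUnion x)))

def memRelZ (x y : ZFSet) : ZFSet :=
  ZFSet.sep (fun p => ∃ a ∈ x, ∃ b ∈ y, a ∈ b ∧ p = ZFSet.pair a b) (prodZ x y)

def tripBound (x : ZFSet) : ZFSet :=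
  (ZFSet.sUnion (ZFSet.sUnion x)) ∪ (ZFSet.sUnion (ZFSet.sUnion (ZFSet.sUnion (ZFSet.sUnion x))))

def perm1Z (x : ZFSet) : ZFSet :=
  ZFSet.sep
    (fun p => ∃ a b c : ZFSet,
      ZFSet.pair (ZFSet.pair a b) c ∈ x ∧ p = ZFSet.pair (ZFSet.pair a c) b)
    (prodZ (prodZ (tripBound x) (tripBound x)) (tripBound x))

def perm2Z (x : ZFSet) : ZFSet :=
  ZFSet.sep
    (fun p => ∃ a b c : ZFSet,
      ZFSet.pair (ZFSet.pair a b) c ∈ x ∧ p = ZFSet.pair (ZFSet.pair b c) a)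
    (prodZ (prodZ (tripBound x) (tripBound x)) (tripBound x))

def IsTransClass (V : VClass) : Prop := ∀ x ∈ V, ∀ y ∈ x, y ∈ V

def ContainsOrds (V : VClass) : Prop := ∀ α : ZFSet, IsOrd α → α ∈ V

/-- Closure under the Gödel operations. -/
def GodelClosed (V : VClass) : Prop :=
  (∀ x ∈ V, ∀ y ∈ V, ({x, y} : ZFSet) ∈ V) ∧
  (∀ x ∈ V, ∀ y ∈ V, prodZ x y ∈ V) ∧
  (∀ x ∈ V, ∀ y ∈ V, memRelZ x y ∈ V) ∧
  (∀ x ∈ V, ∀ y ∈ V, diffZ x y ∈ V) ∧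
  (∀ x ∈ V, ∀ y ∈ V, x ∩ y ∈ V) ∧
  (∀ x ∈ V, ZFSet.sUnion x ∈ V) ∧
  (∀ x ∈ V, domZ x ∈ V) ∧
  (∀ x ∈ V, convZ x ∈ V) ∧
  (∀ x ∈ V, perm1Z x ∈ V) ∧
  (∀ x ∈ V, perm2Z x ∈ V)

def AlmostUniversal (V : VClass) : Prop :=
  ∀ x : ZFSet, (∀ y ∈ x, y ∈ V) → ∃ z ∈ V, x ⊆ z

def HasChoice (V : VClass) : Prop := ∀ x ∈ V, ∃ w ∈ V, IsWO w x

/-- `V` is a transitive (proper-class) model of ZFC, by Jech's criterion: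
transitive, contains all ordinals, closed under the Gödel operations, almost
universal, and satisfies choice. -/
def IsZFCModel (V : VClass) : Prop :=
  IsTransClass V ∧ ContainsOrds V ∧ GodelClosed V ∧ AlmostUniversal V ∧ HasChoice V

/-- `G` is a `(V, P)`-generic filter. -/
def IsGenericOver (V : VClass) (P le G : ZFSet) : Prop :=
  IsFilterP P le G ∧ ∀ D ∈ V, IsDense P le D → ∃ q ∈ G, q ∈ D

/-- `W = V[G]`: the least ZFC class model extending `V` and containing `G`. -/
def IsGenericExt (V W : VClass) (G : ZFSet) : Prop :=
  IsZFCModel W ∧ V ⊆ W ∧ G ∈ W ∧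
    ∀ W' : VClass, IsZFCModel W' → V ⊆ W' → G ∈ W' → W ⊆ W'

/-! ### Cohen forcing and the club-shooting poset -/

def twoZ : ZFSet := succZ (succZ ∅)

/-- Cohen forcing `Add(ω)`: finite binary sequences. -/
def CohenP : ZFSet :=
  ZFSet.sep (fun f => ∃ m ∈ ZFSet.omega, IsFunGraph f m ∧ MapsInto f twoZ)
    (ZFSet.powerset (prodZ ZFSet.omega twoZ))

def CohenLe : ZFSet :=
  ZFSet.sep (fun p => ∃ f ∈ CohenP, ∃ g ∈ CohenP, p = ZFSet.pair f g ∧ g ⊆ f)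
    (prodZ CohenP CohenP)

/-- The Skolem hull of `X` inside `(A, ∈, w)`: the least `N ⊇ X` with
`N ≺ (A, ∈, w)`. -/
def SkHull (A w X : ZFSet) : ZFSet :=
  Classical.epsilon fun N =>
    X ⊆ N ∧ Prec N A w ∧ ∀ N' : ZFSet, X ⊆ N' → Prec N' A w → N ⊆ N'

/-- a countable subset of `ω₂` (of `W`) which is *not* in the ground model `V`. -/
def IsNewCtblSub (V W : VClass) (z : ZFSet) : Prop :=
  z ∈ W ∧ z ∉ V ∧ z ⊆ omega2 V ∧ IsCtble W z

def seg (f lam X : ZFSet) : ZFSet :=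
  ZFSet.sep (fun b => ∃ ξ ∈ lam, ∃ y : ZFSet, ZFSet.pair ξ y ∈ f ∧ b ∈ y) X

/-- A condition of `𝔺([ω₂]^ω − V)` as computed in `W ⊇ V`: a countable
continuous `⊂`-increasing function from a countable successor ordinal into the
countable subsets of ω₂ not in `V`. -/
def IsChainCond (V W : VClass) (f : ZFSet) : Prop :=
  f ∈ W ∧
  (∃ η : ZFSet, IsOrd η ∧ η ∈ omega1 W ∧ IsFunGraph f (succZ η)) ∧
  (∀ ξ y : ZFSet, ZFSet.pair ξ y ∈ f → IsNewCtblSub V W y) ∧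
  (∀ ξ ζ y z : ZFSet, ZFSet.pair ξ y ∈ f → ZFSet.pair ζ z ∈ f → ξ ∈ ζ →
      y ⊆ z ∧ y ≠ z) ∧
  (∀ lam y : ZFSet, ZFSet.pair lam y ∈ f → IsLimitOrd lam →
      y = seg f lam (omega2 V))

/-- The club-shooting poset `𝔺([ω₂]^ω − V)`, as computed in `W ⊇ V`. -/
def ClubShootP (V W : VClass) : ZFSet :=
  ZFSet.sep (fun f => IsChainCond V W f)
    (ZFSet.powerset (prodZ (omega1 W) (ZFSet.powerset (omega2 V))))

/-- Ordering of the club-shooting poset: end-extension. -/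
def ClubShootLe (V W : VClass) : ZFSet :=
  ZFSet.sep
    (fun p => ∃ g ∈ ClubShootP V W, ∃ f ∈ ClubShootP V W, p = ZFSet.pair g f ∧ f ⊆ g)
    (prodZ (ClubShootP V W) (ClubShootP V W))

/-! ### cofinality -/

def CofLE (U : VClass) (δ α : ZFSet) : Prop :=
  ∃ x ∈ U, x ⊆ δ ∧ Unbdd x δ ∧ cardLE U x α

/-- The cofinality of `δ`, computed in `U`. -/
def Cof (U : VClass) (δ : ZFSet) : ZFSet :=
  Classical.epsilon fun α => IsOrd α ∧ CofLE U δ α ∧ ∀ β ∈ α, ¬ CofLE U δ β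

/-! ### Ideals, precipitousness, measurability -/

def sInterZ (c κ : ZFSet) : ZFSet := ZFSet.sep (fun b => ∀ y ∈ c, b ∈ y) κ

/-- `I` is a (proper, countably complete, nontrivial) ideal on `κ`, computed in `U`. -/
def IsIdealOn (U : VClass) (I κ : ZFSet) : Prop :=
  I ∈ U ∧ (∀ x ∈ I, x ⊆ κ) ∧ κ ∉ I ∧
  (∀ α ∈ κ, ({α} : ZFSet) ∈ I) ∧
  (∀ x ∈ I, ∀ y : ZFSet, y ⊆ x → y ∈ I) ∧
  (∀ c ∈ U, (∀ y ∈ c, y ∈ I) → IsCtble U c → ZFSet.sUnion c ∈ I)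

/-- `I` is a normal ideal on `κ`: additionally closed under diagonal unions. -/
def IsNormalIdeal (U : VClass) (I κ : ZFSet) : Prop :=
  IsIdealOn U I κ ∧
  ∀ g ∈ U, IsFunGraph g κ → (∀ α x : ZFSet, ZFSet.pair α x ∈ g → x ∈ I) →
    ZFSet.sep (fun β => ∃ α ∈ β, ∃ x : ZFSet, ZFSet.pair α x ∈ g ∧ β ∈ x) κ ∈ I

/-- The `I`-positive subsets of `κ`: the conditions of `P(κ)/I`. -/
def posSets (I κ : ZFSet) : ZFSet := ZFSet.sep (fun S => S ∉ I) (ZFSet.powerset κ)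

/-- The ordering of `P(κ)/I`: `S ≤ T` iff `S − T ∈ I`. -/
def quotLe (I κ : ZFSet) : ZFSet :=
  ZFSet.sep
    (fun p => ∃ S ∈ posSets I κ, ∃ T ∈ posSets I κ, p = ZFSet.pair S T ∧ diffZ S T ∈ I)
    (prodZ (posSets I κ) (posSets I κ))

/-- finite sequences from `A`, coded as functions with domain some `m ∈ ω`. -/
def FinSeqs (A : ZFSet) : ZFSet :=
  ZFSet.sep (fun s => ∃ m ∈ ZFSet.omega, IsFunGraph s m ∧ MapsInto s A)
    (ZFSet.powerset (prodZ ZFSet.omega A))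

def restrSeq (p m : ZFSet) : ZFSet :=
  ZFSet.sep (fun t => ∃ k ∈ m, ∃ y : ZFSet, t = ZFSet.pair k y) p

/-- Precipitousness of an ideal `I` on ω₁ (computed in `U`), via the
Galvin–Jech–Prikry game characterization: the "empty" player (who moves first,
playing the sets `a m`, against replies `b m`, all `I`-positive and
decreasing) has no winning strategy producing plays with empty intersection. -/
def IsPrecipitous (U : VClass) (I : ZFSet) : Prop :=
  ¬ ∃ st ∈ U, IsFunGraph st (FinSeqs (ZFSet.powerset (omega1 U))) ∧
    ∀ a ∈ U, ∀ b ∈ U, IsFunGraph a ZFSet.omega → IsFunGraph b ZFSet.omega →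
      (∀ m y : ZFSet, ZFSet.pair m y ∈ a → y ⊆ omega1 U ∧ y ∉ I) →
      (∀ m y : ZFSet, ZFSet.pair m y ∈ b → y ⊆ omega1 U ∧ y ∉ I) →
      (∀ m y z : ZFSet, ZFSet.pair m y ∈ a → ZFSet.pair m z ∈ b → z ⊆ y) →
      (∀ m y z : ZFSet, ZFSet.pair m y ∈ b → ZFSet.pair (succZ m) z ∈ a → z ⊆ y) →
      (∀ m ∈ ZFSet.omega, ∀ y : ZFSet, ZFSet.pair m y ∈ a →
        ZFSet.pair (restrSeq b m) y ∈ st) →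
      ZFSet.sep (fun ξ => ∀ m ∈ ZFSet.omega, ∀ y : ZFSet, ZFSet.pair m y ∈ a → ξ ∈ y)
        (omega1 U) = ∅

/-- `V` has a measurable cardinal: a κ-complete nonprincipal ultrafilter on an
uncountable κ, all computed in `V`. -/
def HasMeasurable (V : VClass) : Prop :=
  ∃ κ Uf : ZFSet, IsOrd κ ∧ ZFSet.omega ∈ κ ∧ Uf ∈ V ∧
    (∀ x ∈ Uf, x ⊆ κ) ∧ κ ∈ Uf ∧ (∅ : ZFSet) ∉ Uf ∧
    (∀ x ∈ Uf, ∀ y : ZFSet, y ∈ V → x ⊆ y → y ⊆ κ → y ∈ Uf) ∧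
    (∀ x : ZFSet, x ∈ V → x ⊆ κ → (x ∈ Uf ∨ diffZ κ x ∈ Uf)) ∧
    (∀ α ∈ κ, diffZ κ ({α} : ZFSet) ∈ Uf) ∧
    (∀ c ∈ V, (∀ y ∈ c, y ∈ Uf) → cardLT V c κ → sInterZ c κ ∈ Uf)

/-! ### Trees on ω₂ -/

def predSet (T lt t : ZFSet) : ZFSet := ZFSet.sep (fun s => ZFSet.pair s t ∈ lt) T

def IsOrderIso (e X r α : ZFSet) : Prop :=
  IsBijGraph e X α ∧
    ∀ s t u v : ZFSet, ZFSet.pair s u ∈ e → ZFSet.pair t v ∈ e →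
      (ZFSet.pair s t ∈ r ↔ u ∈ v)

/-- The α-th level of the tree `(T, <_T)`. -/
def levelAt (T lt α : ZFSet) : ZFSet :=
  ZFSet.sep (fun t => ∃ e : ZFSet, IsOrderIso e (predSet T lt t) lt α) T

def IsTree (T lt : ZFSet) : Prop :=
  (∀ p ∈ lt, ∃ a ∈ T, ∃ b ∈ T, p = ZFSet.pair a b) ∧
  (∀ a ∈ T, ZFSet.pair a a ∉ lt) ∧
  (∀ a b c : ZFSet, ZFSet.pair a b ∈ lt → ZFSet.pair b c ∈ lt → ZFSet.pair a c ∈ lt) ∧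
  (∀ t ∈ T, ∀ s ∈ predSet T lt t, ∀ s' ∈ predSet T lt t,
      s ≠ s' → (ZFSet.pair s s' ∈ lt ∨ ZFSet.pair s' s ∈ lt)) ∧
  (∀ x : ZFSet, x ⊆ T → x ≠ ∅ → ∃ m ∈ x, ∀ y ∈ x, ZFSet.pair y m ∉ lt)

/-- `(T, <_T)` is an Aronszajn tree on ω₂ (computed in `U`): height ω₂, levels
of size `< ω₂`, no cofinal branch. -/
def IsAronszajnOmega2 (U : VClass) (T lt : ZFSet) : Prop :=
  IsTree T lt ∧
  (∀ α ∈ omega2 U, levelAt T lt α ≠ ∅) ∧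
  (∀ t ∈ T, ∃ α ∈ omega2 U, t ∈ levelAt T lt α) ∧
  (∀ α ∈ omega2 U, cardLT U (levelAt T lt α) (omega2 U)) ∧
  ¬ ∃ b : ZFSet, b ⊆ T ∧
      (∀ s ∈ b, ∀ t ∈ b, s = t ∨ ZFSet.pair s t ∈ lt ∨ ZFSet.pair t s ∈ lt) ∧
      ∀ α ∈ omega2 U, ∃ t ∈ b, t ∈ levelAt T lt α

/-- `(T, <_T)` is special: the union of ω₁ many antichains. -/
def IsSpecialTree (U : VClass) (T lt : ZFSet) : Prop :=
  ∃ c : ZFSet, IsFunGraph c T ∧ MapsInto c (omega1 U) ∧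
    ∀ s t γ : ZFSet, ZFSet.pair s γ ∈ c → ZFSet.pair t γ ∈ c → ZFSet.pair s t ∉ lt

/-- The Continuum Hypothesis, computed in `U`. -/
def CH (U : VClass) : Prop := cardLE U (ZFSet.powerset ZFSet.omega) (omega1 U)

/-! ### Ladder systems -/

/-- `S²₀ = ω₂ ∩ cof(ω)`, computed in `U`. -/
def S20 (U : VClass) : ZFSet :=
  ZFSet.sep (fun α => IsLimitOrd α ∧ ∃ x : ZFSet, x ⊆ α ∧ IsCtble U x ∧ Unbdd x α)
    (omega2 U)

/-- `S²₁ = ω₂ ∩ cof(ω₁)`, computed in `U`. -/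
def S21 (U : VClass) : ZFSet :=
  ZFSet.sep (fun α => IsLimitOrd α ∧ ¬ ∃ x : ZFSet, x ⊆ α ∧ IsCtble U x ∧ Unbdd x α)
    (omega2 U)

/-- `D` is (the graph of) a ladder system on `S²₀`: `D(α)` is cofinal in `α` of
order type ω (all proper initial segments finite). -/
def IsLadderOn (U : VClass) (D : ZFSet) : Prop :=
  IsFunGraph D (S20 U) ∧
    ∀ α d : ZFSet, ZFSet.pair α d ∈ D →
      d ⊆ α ∧ Unbdd d α ∧ ∀ β ∈ α, IsFin (d ∩ β)

/-- A *nonreflecting* ladder system on `S²₀`: for every `γ ∈ S²₁` there is a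
club `C ⊆ γ` and an injective choice function `g` on `C` with `g(α) ∈ D(α)`. -/
def IsNonreflectingLadder (U : VClass) (D : ZFSet) : Prop :=
  IsLadderOn U D ∧
    ∀ γ : ZFSet, γ ∈ S21 U →
      ∃ C g : ZFSet, ClubInOrd C γ ∧ IsFunGraph g C ∧
        (∀ a a' b : ZFSet, ZFSet.pair a b ∈ g → ZFSet.pair a' b ∈ g → a = a') ∧
        (∀ α y : ZFSet, ZFSet.pair α y ∈ g → ∃ d : ZFSet, ZFSet.pair α d ∈ D ∧ y ∈ d)

/-- `W` is *internally club* (`W ∈ IC`): `ω₁ ⊆ W`, `|W| = ω₁`, and `W ∩ [W]^ω`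
contains a club in `[W]^ω`. -/
def IsIC (U : VClass) (W : ZFSet) : Prop :=
  omega1 U ⊆ W ∧ cardEq U W (omega1 U) ∧
    ∃ g : ZFSet, IsAlgebraOn g W ∧
      ∀ z : ZFSet, z ⊆ W → IsCtble U z → ClosedUnder z g → z ∈ W

/-!
Shrinking the stationary set `S` to its `g`-closed members keeps it stationary, because two
algebras on `H_θ` can be merged into a single one whose closed sets are closed under both.
Applying `RP_Γ` to the shrunken set gives `W ∈ Γ` reflecting it; then every finite subset of `W`
lies inside some `g`-closed member of `S ∩ [W]^ω`, so `W` itself is closed under `g`.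
-/

universe u

def funVal (g x : ZFSet) : ZFSet :=
  Classical.epsilon fun b => ZFSet.pair x b ∈ g

lemma IsFunGraph.pair_funVal_mem {g d x : ZFSet} (hg : IsFunGraph g d) (hx : x ∈ d) :
    ZFSet.pair x (funVal g x) ∈ g :=
  Classical.epsilon_spec (hg.2.1 x hx).exists

lemma IsFunGraph.eq_funVal {g d x b : ZFSet} (hg : IsFunGraph g d)
    (hxb : ZFSet.pair x b ∈ g) : b = funVal g x :=
  (hg.2.1 x (hg.2.2 x b hxb)).unique hxb (hg.pair_funVal_mem (hg.2.2 x b hxb))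

def graphOn (f : ZFSet → ZFSet) (d : ZFSet) : ZFSet :=
  @ZFSet.map f (Classical.allZFSetDefinable _) d

lemma mem_graphOn {f : ZFSet → ZFSet} {d p : ZFSet} :
    p ∈ graphOn f d ↔ ∃ x ∈ d, ZFSet.pair x (f x) = p :=
  @ZFSet.mem_map f (Classical.allZFSetDefinable _) d p

lemma IsFunGraph.eq_graphOn {g d : ZFSet} (hg : IsFunGraph g d) : g = graphOn (funVal g) d := by
  ext p
  rw [mem_graphOn]
  constructor
  · intro hp
    obtain ⟨x, hx, b, rfl⟩ := hg.1 p hp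
    exact ⟨x, hx, by rw [← hg.eq_funVal hp]⟩
  · rintro ⟨x, hx, rfl⟩
    exact hg.pair_funVal_mem hx

lemma isFunGraph_graphOn (f : ZFSet → ZFSet) (d : ZFSet) : IsFunGraph (graphOn f d) d := by
  refine ⟨fun p hp => ?_, fun x hx => @ZFSet.map_unique f (Classical.allZFSetDefinable _) d x hx,
    fun x b hxb => ?_⟩
  · obtain ⟨x, hx, rfl⟩ := mem_graphOn.1 hp
    exact ⟨x, hx, f x, rfl⟩
  · obtain ⟨y, hy, he⟩ := mem_graphOn.1 hxb
    exact (ZFSet.pair_inj.1 he).1 ▸ hy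

lemma closedUnder_graphOn_iff {f : ZFSet → ZFSet} {d z : ZFSet} :
    ClosedUnder z (graphOn f d) ↔ ∀ t ∈ d, t ⊆ z → f t ∈ z := by
  constructor
  · intro hz t ht htz
    exact hz t (f t) (mem_graphOn.2 ⟨t, ht, rfl⟩) htz
  · intro hz t b htb htz
    obtain ⟨t', ht', he⟩ := mem_graphOn.1 htb
    obtain ⟨rfl, rfl⟩ := ZFSet.pair_inj.1 he
    exact hz t' ht' htz

lemma IsAlgebraOn.closedUnder_iff {g X z : ZFSet} (hg : IsAlgebraOn g X) :
    ClosedUnder z g ↔ ∀ t ∈ FinSubsets X, t ⊆ z → funVal g t ∈ z := by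
  conv_lhs => rw [hg.1.eq_graphOn]
  exact closedUnder_graphOn_iff

lemma isAlgebraOn_graphOn {f : ZFSet → ZFSet} {X : ZFSet} (hf : ∀ t ∈ FinSubsets X, f t ∈ X) :
    IsAlgebraOn (graphOn f (FinSubsets X)) X := by
  refine ⟨isFunGraph_graphOn f _, fun t b htb => ?_⟩
  obtain ⟨t, ht, he⟩ := mem_graphOn.1 htb
  exact (ZFSet.pair_inj.1 he).2 ▸ hf t ht

def natZ (n : ℕ) : ZFSet := Ordinal.toZFSet n

lemma natZ_injective : Function.Injective natZ :=
  Ordinal.toZFSet_injective.comp Nat.cast_injective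

lemma mem_natZ {n : ℕ} {x : ZFSet} : x ∈ natZ n ↔ ∃ k < n, natZ k = x := by
  rw [natZ, Ordinal.mem_toZFSet_iff]
  constructor
  · rintro ⟨a, ha, rfl⟩
    obtain ⟨k, rfl⟩ := Ordinal.lt_omega0.1 (ha.trans (Ordinal.natCast_lt_omega0 n))
    exact ⟨k, by exact_mod_cast ha, rfl⟩
  · rintro ⟨k, hk, rfl⟩
    exact ⟨k, by exact_mod_cast hk, rfl⟩

lemma finite_natZ (n : ℕ) : (natZ n : Set ZFSet).Finite :=
  ((Set.finite_Iio n).image natZ).subset fun _ hx =>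
    let ⟨k, hk, hkx⟩ := mem_natZ.1 hx
    ⟨k, hk, hkx⟩

lemma natZ_eq_mk (n : ℕ) : natZ n = ZFSet.mk (PSet.ofNat n) := by
  induction n with
  | zero => rw [natZ, Nat.cast_zero, Ordinal.toZFSet_zero]; rfl
  | succ n ih =>
    rw [natZ, Nat.cast_succ, Ordinal.toZFSet_add_one, ← natZ, ih]
    rfl

lemma mem_omega_iff {x : ZFSet} : x ∈ ZFSet.omega ↔ ∃ n, natZ n = x := by
  induction x using Quotient.inductionOn with
  | h px =>
    constructor
    · rintro ⟨⟨n⟩, hn⟩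
      exact ⟨n, by rw [natZ_eq_mk]; exact (ZFSet.sound hn).symm⟩
    · rintro ⟨n, hn⟩
      rw [← hn, natZ_eq_mk]
      exact ⟨⟨n⟩, PSet.Equiv.refl _⟩

lemma isFin_iff {s : ZFSet} : IsFin s ↔ (s : Set ZFSet).Finite := by
  constructor
  · rintro ⟨n, hn, g, ⟨⟨hg, hgn, hinj⟩, -⟩⟩
    obtain ⟨m, rfl⟩ := mem_omega_iff.1 hn
    refine Set.Finite.of_injOn (f := funVal g) (fun x hx => hgn _ _ (hg.pair_funVal_mem hx))
      (fun x hx y hy hxy => hinj x y _ (hg.pair_funVal_mem hx) ?_) (finite_natZ m)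
    exact hxy ▸ hg.pair_funVal_mem hy
  · classical
    intro hs
    have := hs.fintype
    let σ := Fintype.equivFin (s : Set ZFSet)
    let f : ZFSet → ZFSet := fun x => if hx : x ∈ s then natZ (σ ⟨x, hx⟩) else ∅
    have hf : ∀ x (hx : x ∈ s), f x = natZ (σ ⟨x, hx⟩) := fun x hx => dif_pos hx
    refine ⟨natZ (Fintype.card (s : Set ZFSet)), mem_omega_iff.2 ⟨_, rfl⟩, graphOn f s,
      ⟨⟨isFunGraph_graphOn f s, ?maps, ?inj⟩, ?surj⟩⟩
    case maps =>
      intro x b hxb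
      obtain ⟨x, hx, he⟩ := mem_graphOn.1 hxb
      rw [← (ZFSet.pair_inj.1 he).2, hf x hx]
      exact mem_natZ.2 ⟨_, (σ ⟨x, hx⟩).2, rfl⟩
    case inj =>
      intro a a' b hab ha'b
      obtain ⟨x, hx, he⟩ := mem_graphOn.1 hab
      obtain ⟨x', hx', he'⟩ := mem_graphOn.1 ha'b
      obtain ⟨rfl, hb⟩ := ZFSet.pair_inj.1 he
      obtain ⟨rfl, hb'⟩ := ZFSet.pair_inj.1 he'
      rw [hf x hx, ← hb', hf x' hx'] at hb
      exact congrArg Subtype.val (σ.injective (Fin.ext (natZ_injective hb)))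
    case surj =>
      intro b hb
      obtain ⟨k, hk, rfl⟩ := mem_natZ.1 hb
      obtain ⟨⟨x, hx⟩, hxk⟩ := σ.surjective ⟨k, hk⟩
      refine ⟨x, mem_graphOn.2 ⟨x, hx, ?_⟩⟩
      rw [hf x hx, hxk]

lemma mem_finSubsets {X s : ZFSet} : s ∈ FinSubsets X ↔ s ⊆ X ∧ (s : Set ZFSet).Finite := by
  rw [FinSubsets, ZFSet.mem_sep, ZFSet.mem_powerset, isFin_iff]

lemma mem_finSubsets_of_subset {X s t : ZFSet} (hs : s ∈ FinSubsets X) (hts : t ⊆ s) :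
    t ∈ FinSubsets X :=
  have hs := mem_finSubsets.1 hs
  mem_finSubsets.2 ⟨fun _ hx => hs.1 (hts hx), hs.2.subset fun _ hx => hts hx⟩

/-- The algebra sends a finite `t` to some point of `s \ t`. -/
lemma exists_algebra_forall_closedUnder_subset {X s w : ZFSet} (hw : w ∈ X) (hsX : s ⊆ X)
    (hs : (s : Set ZFSet).Finite) :
    ∃ k, IsAlgebraOn k X ∧ ∀ z, ClosedUnder z k → s ⊆ z := by
  classical
  let f : ZFSet → ZFSet := fun t => if h : ∃ x ∈ s, x ∉ t then h.choose else w
  refine ⟨graphOn f (FinSubsets X), isAlgebraOn_graphOn fun t _ => ?_, fun z hz => ?_⟩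
  · by_cases h : ∃ x ∈ s, x ∉ t
    · simpa only [f, dif_pos h] using hsX h.choose_spec.1
    · simpa only [f, dif_neg h] using hw
  · intro x hxs
    by_contra hxz
    have h : ∃ x ∈ s, x ∉ s ∩ z := ⟨x, hxs, fun hx => hxz (ZFSet.mem_inter.1 hx).2⟩
    have hfz : f (s ∩ z) ∈ z := closedUnder_graphOn_iff.1 hz (s ∩ z)
      (mem_finSubsets.2 ⟨fun x hx => hsX (ZFSet.mem_inter.1 hx).1,
        hs.subset fun x hx => (ZFSet.mem_inter.1 hx).1⟩)
      fun x hx => (ZFSet.mem_inter.1 hx).2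
    simp only [f, dif_pos h] at hfz
    exact h.choose_spec.2 (ZFSet.mem_inter.2 ⟨h.choose_spec.1, hfz⟩)

lemma insert_sdiff_singleton {a s : ZFSet} (ha : a ∉ s) : insert a s \ {a} = s := by
  ext x
  simp only [ZFSet.mem_sdiff, ZFSet.mem_insert_iff, ZFSet.mem_singleton]
  constructor
  · rintro ⟨rfl | hx, hxa⟩
    · exact absurd rfl hxa
    · exact hx
  · intro hx
    exact ⟨Or.inr hx, fun hxa => ha (hxa ▸ hx)⟩

/-- Sending each initial segment `{e 0, …, e (n-1)}` to `e n` forces all of `e` into every closed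
set; any other `t` codes `t \ {e m}`, for the largest `m` with `e m ∈ t`, together with the parity
of `m`, which selects `G` or `H`. -/
def mergeOp (e : ℕ → ZFSet) (G H : ZFSet → ZFSet) (t : ZFSet) : ZFSet :=
  open scoped Classical in
  if h : ∃ n, (t : Set ZFSet) = e '' Set.Iio n then e h.choose
  else (if Even (sSup (e ⁻¹' t)) then G else H) (t \ {e (sSup (e ⁻¹' t))})

section mergeOp

variable {X : ZFSet} {e : ℕ → ZFSet} {G H : ZFSet → ZFSet}

lemma mergeOp_mem (heX : ∀ n, e n ∈ X) (hG : ∀ t ∈ FinSubsets X, G t ∈ X)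
    (hH : ∀ t ∈ FinSubsets X, H t ∈ X) {t : ZFSet} (ht : t ∈ FinSubsets X) :
    mergeOp e G H t ∈ X := by
  have hsdiff : ∀ a, t \ {a} ∈ FinSubsets X := fun a =>
    mem_finSubsets_of_subset ht fun _ hx => (ZFSet.mem_sdiff.1 hx).1
  unfold mergeOp
  split_ifs
  · exact heX _
  · exact hG _ (hsdiff _)
  · exact hH _ (hsdiff _)

lemma mergeOp_of_coe_eq_image_Iio (he : e.Injective) {t : ZFSet} {n : ℕ}
    (ht : (t : Set ZFSet) = e '' Set.Iio n) : mergeOp e G H t = e n := by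
  have h : ∃ n, (t : Set ZFSet) = e '' Set.Iio n := ⟨n, ht⟩
  have hn : h.choose = n :=
    Set.Iio_injective (Set.image_injective.2 he (h.choose_spec.symm.trans ht))
  rw [mergeOp, dif_pos h, hn]

lemma mergeOp_insert (he : e.Injective) {s : ZFSet} {B m : ℕ} (hB : ∀ i, e i ∈ s → i < B)
    (hm : B + 1 < m) : mergeOp e G H (insert (e m) s) = (if Even m then G else H) s := by
  have hms : e m ∉ s := fun h => by have := hB m h; omega
  -- `e (m - 1)` is missing, so `insert (e m) s` is not an initial segment
  have hseg : ¬ ∃ n, ((insert (e m) s : ZFSet) : Set ZFSet) = e '' Set.Iio n := by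
    rintro ⟨n, hn⟩
    have hmn : e m ∈ e '' Set.Iio n := by
      rw [← hn, SetLike.mem_coe]
      exact ZFSet.mem_insert _ _
    replace hmn : m < n := Set.mem_Iio.1 (he.mem_set_image.1 hmn)
    have : e (m - 1) ∈ insert (e m) s := by
      rw [← SetLike.mem_coe, hn]
      exact ⟨m - 1, Set.mem_Iio.2 (by omega), rfl⟩
    rcases ZFSet.mem_insert_iff.1 this with h | h
    · have := he h; omega
    · have := hB _ h; omega
  have htop : sSup (e ⁻¹' ((insert (e m) s : ZFSet) : Set ZFSet)) = m := by
    refine IsGreatest.csSup_eq ⟨SetLike.mem_coe.2 (ZFSet.mem_insert _ _), fun i hi => ?_⟩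
    rcases ZFSet.mem_insert_iff.1 (SetLike.mem_coe.1 hi) with h | h
    · exact (he h).le
    · have := hB i h; omega
  rw [mergeOp, dif_neg hseg, htop, insert_sdiff_singleton hms]

lemma mem_of_forall_mergeOp_mem (he : e.Injective) (heX : ∀ n, e n ∈ X) {z : ZFSet}
    (hz : ∀ t ∈ FinSubsets X, t ⊆ z → mergeOp e G H t ∈ z) (n : ℕ) : e n ∈ z := by
  induction n using Nat.strong_induction_on with
  | _ n ih =>
    let seg := ZFSet.sep (· ∈ e '' Set.Iio n) X
    have hseg : (seg : Set ZFSet) = e '' Set.Iio n := by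
      ext x
      simp only [seg, SetLike.mem_coe, ZFSet.mem_sep, and_iff_right_iff_imp]
      rintro ⟨i, -, rfl⟩
      exact heX i
    have hsegz : seg ⊆ z := by
      intro x hx
      rw [← SetLike.mem_coe, hseg] at hx
      obtain ⟨i, hi, rfl⟩ := hx
      exact ih i hi
    have hsegX : seg ∈ FinSubsets X := mem_finSubsets.2
      ⟨fun _ hx => (ZFSet.mem_sep.1 hx).1, hseg ▸ (Set.finite_Iio n).image e⟩
    simpa only [mergeOp_of_coe_eq_image_Iio he hseg] using hz seg hsegX hsegz

lemma apply_mem_of_forall_mergeOp_mem (he : e.Injective) (heX : ∀ n, e n ∈ X) {z : ZFSet}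
    (hz : ∀ t ∈ FinSubsets X, t ⊆ z → mergeOp e G H t ∈ z) {t : ZFSet}
    (ht : t ∈ FinSubsets X) (htz : t ⊆ z) : G t ∈ z ∧ H t ∈ z := by
  obtain ⟨B, hB⟩ := ((mem_finSubsets.1 ht).2.preimage he.injOn).bddAbove
  have hB' : ∀ i, e i ∈ t → i < B + 1 := fun i hi => Nat.lt_succ_of_le (hB hi)
  have key : ∀ m, B + 2 < m → (if Even m then G else H) t ∈ z := by
    intro m hm
    rw [← mergeOp_insert he hB' hm]
    refine hz _ (mem_finSubsets.2 ⟨?_, ?_⟩) ?_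
    · exact fun x hx => (ZFSet.mem_insert_iff.1 hx).elim (· ▸ heX m)
        fun h => (mem_finSubsets.1 ht).1 h
    · rw [ZFSet.coe_insert]
      exact (mem_finSubsets.1 ht).2.insert _
    · exact fun x hx => (ZFSet.mem_insert_iff.1 hx).elim
        (· ▸ mem_of_forall_mergeOp_mem he heX hz m) fun h => htz h
  constructor
  · simpa [parity_simps] using key (2 * B + 4) (by omega)
  · simpa [Nat.even_add, parity_simps] using key (2 * B + 5) (by omega)

end mergeOp

lemma IsAlgebraOn.funVal_mem {g X t : ZFSet} (hg : IsAlgebraOn g X) (ht : t ∈ FinSubsets X) :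
    funVal g t ∈ X :=
  hg.2 _ _ (hg.1.pair_funVal_mem ht)

lemma IsAlgebraOn.closedUnder_of_subset {g X z : ZFSet} (hg : IsAlgebraOn g X) (hXz : X ⊆ z) :
    ClosedUnder z g :=
  fun s b hsb _ => hXz (hg.2 s b hsb)

lemma exists_algebra_closedUnder_and {X g h : ZFSet} (hg : IsAlgebraOn g X)
    (hh : IsAlgebraOn h X) :
    ∃ k, IsAlgebraOn k X ∧ ∀ z, ClosedUnder z k → ClosedUnder z g ∧ ClosedUnder z h := by
  by_cases hX : (X : Set ZFSet).Finite
  · obtain ⟨k, hk, hkX⟩ := exists_algebra_forall_closedUnder_subset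
      (hg.funVal_mem (mem_finSubsets.2 ⟨ZFSet.empty_subset X, by simp⟩)) (subset_refl X) hX
    exact ⟨k, hk, fun z hz =>
      ⟨hg.closedUnder_of_subset (hkX z hz), hh.closedUnder_of_subset (hkX z hz)⟩⟩
  · let e : ℕ ↪ (X : Set ZFSet) := Set.Infinite.natEmbedding _ hX
    have he : Function.Injective (fun n => (e n : ZFSet)) := Subtype.val_injective.comp e.injective
    have heX : ∀ n, (e n : ZFSet) ∈ X := fun n => (e n).2
    refine ⟨graphOn (mergeOp (fun n => e n) (funVal g) (funVal h)) (FinSubsets X),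
      isAlgebraOn_graphOn fun t ht => mergeOp_mem heX (fun _ => hg.funVal_mem)
        (fun _ => hh.funVal_mem) ht, fun z hz => ?_⟩
    rw [closedUnder_graphOn_iff] at hz
    rw [hg.closedUnder_iff, hh.closedUnder_iff]
    exact ⟨fun t ht htz => (apply_mem_of_forall_mergeOp_mem he heX hz ht htz).1,
      fun t ht htz => (apply_mem_of_forall_mergeOp_mem he heX hz ht htz).2⟩

lemma StatIn.mono {U : VClass} {S T : Set ZFSet} {X : ZFSet} (hST : S ⊆ T)
    (hS : StatIn U S X) : StatIn U T X := by
  intro g hgU hg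
  obtain ⟨z, hzS, hz⟩ := hS g hgU hg
  exact ⟨z, hST hzS, hz⟩

lemma StatIn.inter_closedUnder {S : Set ZFSet} {X g : ZFSet} (hS : StatIn V0 S X)
    (hg : IsAlgebraOn g X) : StatIn V0 {z | z ∈ S ∧ ClosedUnder z g} X := by
  intro k _ hk
  obtain ⟨k', hk', hk'gk⟩ := exists_algebra_closedUnder_and hg hk
  obtain ⟨z, hzS, hzU, hzX, hzc, hzk'⟩ := hS k' trivial hk'
  exact ⟨z, ⟨hzS, (hk'gk z hzk').1⟩, hzU, hzX, hzc, (hk'gk z hzk').2⟩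

/-- Every finite subset of `W` lies in some member of `T`. -/
lemma StatIn.closedUnder {T : Set ZFSet} {W X g w : ZFSet} (hstat : StatIn V0 T W) (hw : w ∈ W)
    (hg : IsAlgebraOn g X) (hT : ∀ z ∈ T, ClosedUnder z g) : ClosedUnder W g := by
  intro s b hsb hsW
  obtain ⟨k, hk, hks⟩ := exists_algebra_forall_closedUnder_subset hw hsW
    (mem_finSubsets.1 (hg.1.2.2 s b hsb)).2
  obtain ⟨z, hzT, -, hzW, -, hzk⟩ := hstat k trivial hk
  exact hzW (hT z hzT s b hsb (hks z hzk))

lemma isCtble_empty {U : VClass} (hU : ∅ ∈ U) : IsCtble U ∅ :=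
  ⟨∅, hU, ⟨⟨fun _ h => absurd h (ZFSet.notMem_empty _), fun _ h => absurd h (ZFSet.notMem_empty _),
    fun _ _ h => absurd h (ZFSet.notMem_empty _)⟩, fun _ _ h => absurd h (ZFSet.notMem_empty _),
    fun _ _ _ h => absurd h (ZFSet.notMem_empty _)⟩⟩

lemma IsRegular.not_isCtble {U : VClass} {θ : ZFSet} (hθ : IsRegular U θ) :
    ¬ IsCtble U θ :=
  hθ.1.2 _ hθ.2.1

lemma omega1_spec {U : VClass} {α : ZFSet} (hα : IsOrd α) (hαU : ¬ IsCtble U α) :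
    IsOrd (omega1 U) ∧ ¬ IsCtble U (omega1 U) ∧ ∀ β ∈ omega1 U, IsCtble U β := by
  obtain ⟨μ, ⟨hμ, hμU⟩, hmin⟩ :=
    ZFSet.mem_wf.has_min {β : ZFSet | IsOrd β ∧ ¬ IsCtble U β} ⟨α, hα, hαU⟩
  refine Classical.epsilon_spec (p := fun α => IsOrd α ∧ ¬ IsCtble U α ∧ ∀ β ∈ α, IsCtble U β)
    ⟨μ, hμ, hμU, fun β hβ => ?_⟩
  by_contra hβU
  exact hmin β ⟨ZFSet.IsOrdinal.mem hμ hβ, hβU⟩ hβ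

lemma omega1_nonempty {θ : ZFSet.{u}} (hθ : IsRegular V0 θ) :
    (omega1 (V0 : VClass.{u})).Nonempty := by
  have hω₁ := (omega1_spec hθ.1.1 hθ.not_isCtble).2.1
  rcases ZFSet.eq_empty_or_nonempty (omega1 V0) with hempty | hne
  · exact absurd (hempty ▸ isCtble_empty trivial) hω₁
  · exact hne

/-- Suppose `Γ` is a class of sets `W` with `|W| = ω₁ ⊆ W`
and `RP_Γ` holds.  Then for every regular `θ ≥ ω₂` and every stationary
`S ⊆ [H_θ]^ω` there are in fact *stationarily many* `W ∈ [H_θ]^{ω₁} ∩ Γ` (that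
is: for every algebra on `H_θ` there is such a `W` closed under it) with
`S ∩ [W]^ω` stationary in `[W]^ω`. -/
theorem RP_gives_stationarily_many_reflecting_sets
    (Γ : Set ZFSet)
    (hΓ : ∀ W ∈ Γ, omega1 V0 ⊆ W ∧ cardEq V0 W (omega1 V0))
    (hRP : ∀ θ : ZFSet, IsRegular V0 θ → omega2 V0 ⊆ θ →
      ∀ S : ZFSet, (∀ z ∈ S, z ⊆ Hset V0 θ ∧ IsCtble V0 z) →
        StatIn V0 S.toSet (Hset V0 θ) →
        ∃ W ∈ Γ, W ⊆ Hset V0 θ ∧ StatIn V0 {z : ZFSet | z ∈ S ∧ z ⊆ W} W) :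
    ∀ θ : ZFSet, IsRegular V0 θ → omega2 V0 ⊆ θ →
      ∀ S : ZFSet, (∀ z ∈ S, z ⊆ Hset V0 θ ∧ IsCtble V0 z) →
        StatIn V0 S.toSet (Hset V0 θ) →
        ∀ g : ZFSet, IsAlgebraOn g (Hset V0 θ) →
          ∃ W ∈ Γ, W ⊆ Hset V0 θ ∧ ClosedUnder W g ∧
            StatIn V0 {z : ZFSet | z ∈ S ∧ z ⊆ W} W := by
  intro θ hθ hθω₂ S hS hstat g hg
  let Sg := ZFSet.sep (ClosedUnder · g) S
  have hSg : StatIn V0 Sg.toSet (Hset V0 θ) :=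
    (hstat.inter_closedUnder hg).mono fun z hz => ZFSet.mem_sep.2 hz
  obtain ⟨W, hWΓ, hWθ, hWstat⟩ :=
    hRP θ hθ hθω₂ Sg (fun z hz => hS z (ZFSet.mem_sep.1 hz).1) hSg
  obtain ⟨w, hw⟩ := omega1_nonempty hθ
  refine ⟨W, hWΓ, hWθ, hWstat.closedUnder ((hΓ W hWΓ).1 hw) hg
    fun z hz => (ZFSet.mem_sep.1 hz.1).2, hWstat.mono fun z hz => ?_⟩
  exact ⟨(ZFSet.mem_sep.1 hz.1).1, hz.2⟩

end

end CCPaper
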